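/- arXiv:2507.05074 — 2 statements merged into one kernel-verified Lean document; each statement's English description precedes it below -/
import Mathlib

section
/- Let r ∈ (0,1/2). For every measurable function F : ℝ³ → [0,∞], one has ∫_{A_r} F(x₁,x₂,x₃) dx₁ dx₂ dx₃ = ∫_{Ω_r} ∫_{r/u}^{1} F(ut, vt, t) · t² dt du dv, as an identity in [0,∞]. -/
open MeasureTheory

/-- The region `A_r` of ordered triangle-admissible triples. -/
def regionA (r : ℝ) : Set (ℝ × ℝ × ℝ) :=
  {p | r ≤ p.1 ∧ p.1 < p.2.1 ∧ p.2.1 < p.2.2 ∧ p.2.2 ≤ 1 ∧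
    p.2.1 - p.1 ≤ p.2.2 ∧ p.2.2 ≤ p.1 + p.2.1}

/-- The shape domain `Ω_r`. -/
def regionOmega (r : ℝ) : Set (ℝ × ℝ) :=
  {p | r < p.1 ∧ p.1 < 1 / 2 ∧ 1 - p.1 < p.2 ∧ p.2 < 1} ∪
  {p | 1 / 2 < p.1 ∧ p.1 < 1 ∧ p.1 < p.2 ∧ p.2 < 1}

/-!
Substitute `x = (u t, v t, t)`. Up to the null hyperplanes `x₁ = r`, `x₃ = 1`, `x₃ = x₁ + x₂`
and `x₃ = 2 x₁` (the last one is `u = 1/2`, which `Ω_r` omits), `A_r` is the image of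
`{((u, v), t) | (u, v) ∈ Ω_r, r / u < t < 1}`, on which the substitution is injective. Its
derivative is a transvection composed with `t • id × id`, so its Jacobian is `t²`; the
change-of-variables formula and Tonelli's theorem then give the identity.
-/

open Set Module

instance {G H : Type*} [AddGroup G] [TopologicalSpace G] [MeasureSpace G] [MeasurableAdd G]
    [AddGroup H] [TopologicalSpace H] [MeasureSpace H] [MeasurableAdd H]
    [(volume : Measure G).IsAddHaarMeasure] [(volume : Measure H).IsAddHaarMeasure]
    [SFinite (volume : Measure G)] [SFinite (volume : Measure H)] :
    (volume : Measure (G × H)).IsAddHaarMeasure :=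
  Measure.prod.instIsAddHaarMeasure _ _

theorem addHaar_setOf_linearMap_eq {E : Type*} [NormedAddCommGroup E]
    [NormedSpace ℝ E] [MeasurableSpace E] [BorelSpace E] [FiniteDimensional ℝ E] (μ : Measure E)
    [μ.IsAddHaarMeasure] {l : E →ₗ[ℝ] ℝ} (hl : l ≠ 0) (c : ℝ) : μ {x | l x = c} = 0 := by
  rcases eq_empty_or_nonempty {x | l x = c} with h | ⟨x₀, rfl⟩
  · simp [h]
  have : {x | l x = l x₀} = (-x₀ + ·) ⁻¹' (LinearMap.ker l : Set E) := by
    ext x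
    simp [sub_eq_zero, neg_add_eq_sub]
  rw [this, measure_preimage_add]
  exact Measure.addHaar_submodule μ _ (mt LinearMap.ker_eq_top.1 hl)

theorem volume_setOf_affine_eq (a b c d : ℝ) (h : a ≠ 0 ∨ b ≠ 0 ∨ c ≠ 0) :
    volume {x : (ℝ × ℝ) × ℝ | a * x.1.1 + b * x.1.2 + c * x.2 = d} = 0 := by
  let l : (ℝ × ℝ) × ℝ →ₗ[ℝ] ℝ := a • (LinearMap.fst ℝ ℝ ℝ ∘ₗ LinearMap.fst ℝ (ℝ × ℝ) ℝ) +
    b • (LinearMap.snd ℝ ℝ ℝ ∘ₗ LinearMap.fst ℝ (ℝ × ℝ) ℝ) + c • LinearMap.snd ℝ (ℝ × ℝ) ℝ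
  have hl : l ≠ 0 := by
    intro hl
    have h₁ := LinearMap.congr_fun hl ((1, 0), 0)
    have h₂ := LinearMap.congr_fun hl ((0, 1), 0)
    have h₃ := LinearMap.congr_fun hl ((0, 0), 1)
    simp only [l, LinearMap.add_apply, LinearMap.smul_apply, LinearMap.coe_comp,
      LinearMap.coe_fst, LinearMap.coe_snd, Function.comp_apply, LinearMap.snd_apply,
      LinearMap.zero_apply, smul_eq_mul, mul_one, mul_zero, add_zero, zero_add] at h₁ h₂ h₃
    tauto
  exact addHaar_setOf_linearMap_eq volume hl d

theorem setLIntegral_prod_setOf {α β : Type*} [MeasurableSpace α] [MeasurableSpace β]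
    {μ : Measure α} {ν : Measure β} [SFinite ν] {s : Set α} {t : α → Set β}
    (hs : MeasurableSet s) (ht : MeasurableSet {q : α × β | q.2 ∈ t q.1})
    {f : α × β → ENNReal} (hf : Measurable f) :
    ∫⁻ q in {q | q.1 ∈ s ∧ q.2 ∈ t q.1}, f q ∂μ.prod ν =
      ∫⁻ a in s, ∫⁻ b in t a, f (a, b) ∂ν ∂μ := by
  have hst : MeasurableSet {q : α × β | q.1 ∈ s ∧ q.2 ∈ t q.1} := (measurable_fst hs).inter ht
  rw [← lintegral_indicator hst, lintegral_prod _ (hf.indicator hst).aemeasurable,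
    ← lintegral_indicator hs]
  congr 1 with a
  by_cases ha : a ∈ s
  · have hta : MeasurableSet (t a) := measurable_prodMk_left ht
    rw [indicator_of_mem ha, ← lintegral_indicator hta]
    congr 1 with b
    by_cases hb : b ∈ t a <;> simp [ha, hb]
  · simp [indicator, ha]

section ConeMap

variable {E : Type*} [NormedAddCommGroup E] [NormedSpace ℝ E]

def coneMap (p : E × ℝ) : E × ℝ := (p.2 • p.1, p.2)

def coneMapDeriv (p : E × ℝ) : E × ℝ →L[ℝ] E × ℝ :=
  (p.2 • ContinuousLinearMap.fst ℝ E ℝ + (ContinuousLinearMap.snd ℝ E ℝ).smulRight p.1).prod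
    (ContinuousLinearMap.snd ℝ E ℝ)

theorem hasFDerivAt_coneMap (p : E × ℝ) : HasFDerivAt coneMap (coneMapDeriv p) p :=
  (hasFDerivAt_snd.smul hasFDerivAt_fst).prodMk hasFDerivAt_snd

theorem det_coneMapDeriv [FiniteDimensional ℝ E] (p : E × ℝ) :
    (coneMapDeriv p).det = p.2 ^ finrank ℝ E := by
  have : (coneMapDeriv p : E × ℝ →ₗ[ℝ] E × ℝ) =
      LinearMap.transvection (LinearMap.snd ℝ E ℝ) (p.1, 0) ∘ₗ
        (p.2 • LinearMap.id).prodMap LinearMap.id := by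
    ext x <;> simp [coneMapDeriv, LinearMap.transvection.apply]
  rw [ContinuousLinearMap.det, this, LinearMap.det_comp, LinearMap.transvection.det,
    LinearMap.det_prodMap, LinearMap.det_smul]
  simp

theorem injOn_coneMap : InjOn (coneMap (E := E)) {p | p.2 ≠ 0} := by
  rintro ⟨x, t⟩ ht ⟨y, s⟩ - h
  simp only [coneMap, Prod.mk.injEq] at h
  obtain ⟨hxy, rfl⟩ := h
  simp [smul_right_injective E ht hxy]

end ConeMap

def shapeScaleSet (r : ℝ) : Set ((ℝ × ℝ) × ℝ) :=
  {q | q.1 ∈ regionOmega r ∧ q.2 ∈ Ioo (r / q.1.1) 1}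

theorem measurableSet_regionOmega (r : ℝ) : MeasurableSet (regionOmega r) := by
  unfold regionOmega; measurability

theorem measurableSet_setOf_snd_mem_Ioo (r : ℝ) :
    MeasurableSet {q : (ℝ × ℝ) × ℝ | q.2 ∈ Ioo (r / q.1.1) 1} :=
  (measurableSet_lt (measurable_const.div measurable_fst.fst) measurable_snd).inter
    (measurableSet_lt measurable_snd measurable_const)

theorem measurableSet_shapeScaleSet (r : ℝ) : MeasurableSet (shapeScaleSet r) :=
  (measurable_fst (measurableSet_regionOmega r)).inter (measurableSet_setOf_snd_mem_Ioo r)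

theorem lt_of_mem_regionOmega {r : ℝ} (hr : r < 1 / 2) {u v : ℝ} (h : (u, v) ∈ regionOmega r) :
    r < u ∧ u < v ∧ v < 1 ∧ 1 < u + v := by
  rcases h with ⟨h₁, h₂, h₃, h₄⟩ | ⟨h₁, h₂, h₃, h₄⟩ <;> refine ⟨?_, ?_, ?_, ?_⟩ <;> linarith

theorem lt_mul_of_mem_shapeScaleSet {r : ℝ} (hr : r ∈ Ioo (0 : ℝ) (1 / 2)) {u v t : ℝ}
    (h : ((u, v), t) ∈ shapeScaleSet r) : 0 < u ∧ r < t * u := by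
  have hu := hr.1.trans (lt_of_mem_regionOmega hr.2 h.1).1
  exact ⟨hu, (div_lt_iff₀ hu).1 h.2.1⟩

theorem shapeScaleSet_subset_snd_ne_zero {r : ℝ} (hr : r ∈ Ioo (0 : ℝ) (1 / 2)) :
    shapeScaleSet r ⊆ {q | q.2 ≠ 0} := by
  rintro ⟨⟨u, v⟩, t⟩ h
  obtain ⟨hu, hrt⟩ := lt_mul_of_mem_shapeScaleSet hr h
  exact (pos_of_mul_pos_left (hr.1.trans hrt) hu.le).ne'

theorem coneMap_image_shapeScaleSet_subset {r : ℝ} (hr : r ∈ Ioo (0 : ℝ) (1 / 2)) :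
    coneMap '' shapeScaleSet r ⊆ MeasurableEquiv.prodAssoc ⁻¹' regionA r := by
  rintro _ ⟨⟨⟨u, v⟩, t⟩, hq, rfl⟩
  obtain ⟨-, huv, hv, huv'⟩ := lt_of_mem_regionOmega hr.2 hq.1
  obtain ⟨hu, hrt⟩ := lt_mul_of_mem_shapeScaleSet hr hq
  have ht : 0 < t := pos_of_mul_pos_left (hr.1.trans hrt) hu.le
  simp only [coneMap, Prod.smul_mk, smul_eq_mul, mem_preimage, MeasurableEquiv.prodAssoc,
    MeasurableEquiv.coe_mk, Equiv.prodAssoc_apply, regionA, mem_ofPred_eq]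
  refine ⟨hrt.le, ?_, ?_, hq.2.2.le, ?_, ?_⟩ <;> nlinarith

theorem mem_coneMap_image_shapeScaleSet {r : ℝ} (hr : 0 < r) {a b c : ℝ} (ha : r < a)
    (hab : a < b) (hbc : b < c) (hc : c < 1) (hcab : c < a + b) (hac : 2 * a ≠ c) :
    ((a, b), c) ∈ coneMap '' shapeScaleSet r := by
  have hc₀ : 0 < c := by linarith
  refine ⟨((a / c, b / c), c), ⟨?_, ?_, hc⟩, ?_⟩
  · have hu : r < a / c := by rw [lt_div_iff₀ hc₀]; nlinarith
    have hv : b / c < 1 := by rwa [div_lt_one hc₀]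
    have huv : 1 - a / c < b / c := by
      rw [sub_lt_iff_lt_add, ← add_div, lt_div_iff₀ hc₀]; linarith
    rcases lt_or_gt_of_ne (show a / c ≠ 1 / 2 by
      rw [Ne, div_eq_div_iff hc₀.ne' two_ne_zero]; contrapose! hac; linarith) with h | h
    · exact Or.inl ⟨hu, h, huv, hv⟩
    · refine Or.inr ⟨h, ?_, div_lt_div_of_pos_right hab hc₀, hv⟩
      rw [div_lt_one hc₀]; linarith
  · show r / (a / c) < c
    rw [div_div_eq_mul_div, div_lt_iff₀ (by linarith)]
    nlinarith
  · simp [coneMap, mul_div_cancel₀ _ hc₀.ne']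

theorem prodAssoc_preimage_regionA_ae_eq {r : ℝ} (hr : r ∈ Ioo (0 : ℝ) (1 / 2)) :
    MeasurableEquiv.prodAssoc ⁻¹' regionA r =ᵐ[volume] coneMap '' shapeScaleSet r := by
  have hnull := measure_union_null (measure_union_null (measure_union_null
      (volume_setOf_affine_eq 1 0 0 r (by norm_num))
      (volume_setOf_affine_eq 0 0 1 1 (by norm_num)))
      (volume_setOf_affine_eq 1 1 (-1) 0 (by norm_num)))
    (volume_setOf_affine_eq 2 0 (-1) 0 (by norm_num))
  refine ae_eq_set.2 ⟨measure_mono_null ?_ hnull, by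
    rw [sdiff_eq_empty.2 (coneMap_image_shapeScaleSet_subset hr), measure_empty]⟩
  rintro ⟨⟨a, b⟩, c⟩ ⟨⟨hra, hab, hbc, hc, -, hcab⟩, hnot⟩
  simp only [MeasurableEquiv.prodAssoc, MeasurableEquiv.coe_mk, Equiv.prodAssoc_apply]
    at hra hab hbc hc hcab
  by_contra hbad
  simp only [mem_union, mem_ofPred_eq, not_or] at hbad
  obtain ⟨⟨⟨hra', hc'⟩, hcab'⟩, hac⟩ := hbad
  exact hnot <| mem_coneMap_image_shapeScaleSet hr.1 (hra.lt_of_ne fun h => hra' (by linarith))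
    hab hbc (hc.lt_of_ne fun h => hc' (by linarith)) (hcab.lt_of_ne fun h => hcab' (by linarith))
    fun h => hac (by linarith)

theorem stmt_3 (r : ℝ) (hr : r ∈ Set.Ioo (0 : ℝ) (1 / 2))
    (F : ℝ × ℝ × ℝ → ENNReal) (hF : Measurable F) :
    ∫⁻ x in regionA r, F x =
    ∫⁻ p in regionOmega r,
      ∫⁻ t in Set.Ioo (r / p.1) 1, F (p.1 * t, p.2 * t, t) * ENNReal.ofReal (t ^ 2) := by
  have hG : Measurable fun q : (ℝ × ℝ) × ℝ =>
      F (q.1.1 * q.2, q.1.2 * q.2, q.2) * ENNReal.ofReal (q.2 ^ 2) := by fun_prop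
  calc ∫⁻ x in regionA r, F x
      = ∫⁻ q in MeasurableEquiv.prodAssoc ⁻¹' regionA r, F (MeasurableEquiv.prodAssoc q) :=
        (volume_preserving_prodAssoc.setLIntegral_comp_preimage_emb
          (MeasurableEquiv.measurableEmbedding _) _ _).symm
    _ = ∫⁻ q in coneMap '' shapeScaleSet r, F (MeasurableEquiv.prodAssoc q) :=
        setLIntegral_congr (prodAssoc_preimage_regionA_ae_eq hr)
    _ = ∫⁻ q in shapeScaleSet r,
          ENNReal.ofReal |(coneMapDeriv q).det| * F (MeasurableEquiv.prodAssoc (coneMap q)) :=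
        lintegral_image_eq_lintegral_abs_det_fderiv_mul volume (measurableSet_shapeScaleSet r)
          (fun q _ => (hasFDerivAt_coneMap q).hasFDerivWithinAt)
          (injOn_coneMap.mono (shapeScaleSet_subset_snd_ne_zero hr)) _
    _ = ∫⁻ q in shapeScaleSet r, F (q.1.1 * q.2, q.1.2 * q.2, q.2) * ENNReal.ofReal (q.2 ^ 2) := by
        refine lintegral_congr fun q => ?_
        rw [det_coneMapDeriv, mul_comm]
        simp [coneMap, MeasurableEquiv.prodAssoc, mul_comm q.2]
    _ = _ := by
        rw [Measure.volume_eq_prod]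
        exact setLIntegral_prod_setOf (μ := volume) (ν := volume) (t := fun p => Ioo (r / p.1) 1)
          (measurableSet_regionOmega r) (measurableSet_setOf_snd_mem_Ioo r) hG
end

section
/- For every r ∈ [0,1/2], the Lebesgue measure (volume) of the set A_r = {(x₁,x₂,x₃) ∈ ℝ³ : r ≤ x₁ < x₂ < x₃ ≤ 1 and x₂−x₁ ≤ x₃ ≤ x₁+x₂} equals 1/12 − r²/2 + r³/2. -/
/-!
Slice at `x₁ = a`. For `r ≤ a ≤ 1` the condition `x₂ - x₁ ≤ x₃` is automatic, so the slice is the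
triangle `a < x₂ < x₃ ≤ 1`, of area `(1 - a)² / 2`, minus its corner `x₃ > a + x₂`, of area
`max(1 - 2a, 0)² / 2`. Integrating over `a ∈ [r, 1]` gives `(1 - r)³ / 6 - (1 - 2r)³ / 12`
when `r ≤ 1 / 2`.
-/

open MeasureTheory

open Set

theorem MeasureTheory.Measure.prod_apply_eq_ofReal_setIntegral {α β : Type*} [MeasurableSpace α]
    [MeasurableSpace β] {μ : Measure α} {ν : Measure β} [SFinite ν] {S : Set (α × β)}
    (hS : MeasurableSet S) {s : Set α} (hs : MeasurableSet s) {f : α → ℝ}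
    (hf : IntegrableOn f s μ) (hf₀ : ∀ x ∈ s, 0 ≤ f x)
    (hfib : ∀ x, ν (Prod.mk x ⁻¹' S) = s.indicator (fun x ↦ ENNReal.ofReal (f x)) x) :
    μ.prod ν S = ENNReal.ofReal (∫ x in s, f x ∂μ) := by
  rw [Measure.prod_apply hS, funext hfib, lintegral_indicator hs,
    ofReal_integral_eq_lintegral_ofReal hf ((ae_restrict_iff' hs).2 (ae_of_all _ hf₀))]

theorem integral_max_sub_zero_pow {a b c : ℝ} (hab : a ≤ b) (hcb : c ≤ b) {n : ℕ} (hn : n ≠ 0) :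
    ∫ y in a..b, max (c - y) 0 ^ n = max (c - a) 0 ^ (n + 1) / (n + 1) := by
  rcases le_total c a with hca | hac
  · have hzero : ∀ y ∈ uIcc a b, max (c - y) 0 ^ n = 0 := fun y hy ↦ by
      rw [uIcc_of_le hab] at hy
      rw [max_eq_right (by linarith [hy.1]), zero_pow hn]
    rw [intervalIntegral.integral_congr hzero, max_eq_right (by linarith)]
    simp [hn]
  · have hcont : Continuous fun y : ℝ ↦ max (c - y) 0 ^ n := by fun_prop
    rw [← intervalIntegral.integral_add_adjacent_intervals (b := c) (hcont.intervalIntegrable _ _)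
      (hcont.intervalIntegrable _ _)]
    have hleft : ∀ y ∈ uIcc a c, max (c - y) 0 ^ n = (c - y) ^ n := fun y hy ↦ by
      rw [uIcc_of_le hac] at hy
      rw [max_eq_left (by linarith [hy.2])]
    have hright : ∀ y ∈ uIcc c b, max (c - y) 0 ^ n = 0 := fun y hy ↦ by
      rw [uIcc_of_le hcb] at hy
      rw [max_eq_right (by linarith [hy.1]), zero_pow hn]
    rw [intervalIntegral.integral_congr hleft, intervalIntegral.integral_congr hright,
      intervalIntegral.integral_comp_sub_left (fun y ↦ y ^ n), max_eq_left (by linarith)]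
    simp

noncomputable def sliceArea (a : ℝ) : ℝ := (1 - a) ^ 2 / 2 - max (1 - 2 * a) 0 ^ 2 / 2

theorem continuous_sliceArea : Continuous sliceArea := by
  unfold sliceArea
  fun_prop

theorem sliceArea_nonneg {a : ℝ} (ha₀ : 0 ≤ a) (ha₁ : a ≤ 1) : 0 ≤ sliceArea a := by
  unfold sliceArea
  rw [sub_nonneg]
  gcongr
  exact max_le (by linarith) (by linarith)

theorem integral_min_one_sub_eq_sliceArea {a : ℝ} (ha₀ : 0 ≤ a) (ha₁ : a ≤ 1) :
    ∫ y in a..1, min (1 - y) a = sliceArea a := by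
  have hmin : ∀ y : ℝ, min (1 - y) a = (1 - y) - max (1 - a - y) 0 := fun y ↦ by
    simp only [max_def, min_def]; split_ifs <;> linarith
  have hcorner := integral_max_sub_zero_pow ha₁ (by linarith : 1 - a ≤ 1) one_ne_zero
  simp only [pow_one] at hcorner
  simp_rw [hmin]
  rw [intervalIntegral.integral_sub
    ((by fun_prop : Continuous fun y : ℝ ↦ 1 - y).intervalIntegrable _ _)
    ((by fun_prop : Continuous fun y : ℝ ↦ max (1 - a - y) 0).intervalIntegrable _ _),
    intervalIntegral.integral_comp_sub_left (fun y ↦ y), hcorner]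
  simp only [sub_self, integral_id, sliceArea, Nat.cast_one]
  ring_nf

theorem integral_sliceArea {r : ℝ} (hr : r ≤ 1 / 2) :
    ∫ x in r..1, sliceArea x = 1 / 12 - r ^ 2 / 2 + r ^ 3 / 2 := by
  have hcorner := intervalIntegral.integral_comp_mul_left (fun y ↦ max (1 - y) 0 ^ 2)
    (two_ne_zero (α := ℝ)) (a := r) (b := 1)
  rw [integral_max_sub_zero_pow (by linarith) (by norm_num) two_ne_zero,
    max_eq_left (by linarith)] at hcorner
  unfold sliceArea
  rw [intervalIntegral.integral_sub
    ((by fun_prop : Continuous fun y : ℝ ↦ (1 - y) ^ 2 / 2).intervalIntegrable _ _)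
    ((by fun_prop : Continuous fun y : ℝ ↦ max (1 - 2 * y) 0 ^ 2 / 2).intervalIntegrable _ _),
    intervalIntegral.integral_div, intervalIntegral.integral_div, hcorner,
    intervalIntegral.integral_comp_sub_left (fun y ↦ y ^ 2), sub_self, integral_pow]
  ring


theorem measurableSet_regionA (r : ℝ) : MeasurableSet (regionA r) := by
  simp only [regionA, ofPred_and]
  measurability

theorem volume_preimage_mk_preimage_mk_regionA {r x : ℝ} (hrx : r ≤ x) (y : ℝ) :
    volume (Prod.mk y ⁻¹' (Prod.mk x ⁻¹' regionA r)) =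
      (Ioo x 1).indicator (fun y ↦ ENNReal.ofReal (min (1 - y) x)) y := by
  by_cases hy : y ∈ Ioo x 1
  · have hfiber : Prod.mk y ⁻¹' (Prod.mk x ⁻¹' regionA r) = Ioc y (min 1 (x + y)) := by
      ext z
      simp only [regionA, mem_preimage, mem_ofPred_eq, mem_Ioc, le_min_iff]
      constructor
      · rintro ⟨-, -, hyz, hz1, -, hzxy⟩; exact ⟨hyz, hz1, hzxy⟩
      · rintro ⟨hyz, hz1, hzxy⟩; exact ⟨hrx, hy.1, hyz, hz1, by linarith [hy.1], hzxy⟩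
    rw [hfiber, Real.volume_Ioc, indicator_of_mem hy, ← min_sub_sub_right, add_sub_cancel_right]
  · have hfiber : Prod.mk y ⁻¹' (Prod.mk x ⁻¹' regionA r) = ∅ := by
      ext z
      simp only [regionA, mem_preimage, mem_ofPred_eq, mem_empty_iff_false, iff_false]
      rintro ⟨-, hxy, hyz, hz1, -⟩
      exact hy ⟨hxy, by linarith⟩
    rw [hfiber, indicator_of_notMem hy, measure_empty]

theorem volume_preimage_mk_regionA {r : ℝ} (hr : 0 ≤ r) (x : ℝ) :
    volume (Prod.mk x ⁻¹' regionA r) =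
      (Icc r 1).indicator (fun x ↦ ENNReal.ofReal (sliceArea x)) x := by
  by_cases hx : x ∈ Icc r 1
  · have hx₀ : 0 ≤ x := hr.trans hx.1
    have hint : IntegrableOn (fun y ↦ min (1 - y) x) (Ioo x 1) :=
      (by fun_prop : Continuous fun y : ℝ ↦ min (1 - y) x).integrableOn_Icc.mono_set
        Ioo_subset_Icc_self
    rw [indicator_of_mem hx, Measure.volume_eq_prod, Measure.prod_apply_eq_ofReal_setIntegral
      (measurable_prodMk_left (measurableSet_regionA r)) measurableSet_Ioo hint
      (fun y hy ↦ le_min (by linarith [hy.2]) hx₀) (volume_preimage_mk_preimage_mk_regionA hx.1),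
      ← integral_Ioc_eq_integral_Ioo, ← intervalIntegral.integral_of_le hx.2,
      integral_min_one_sub_eq_sliceArea hx₀ hx.2]
  · have hfiber : Prod.mk x ⁻¹' regionA r = ∅ := by
      ext q
      simp only [regionA, mem_preimage, mem_ofPred_eq, mem_empty_iff_false, iff_false]
      rintro ⟨hrx, hxy, hyz, hz1, -⟩
      exact hx ⟨hrx, by linarith⟩
    rw [hfiber, indicator_of_notMem hx, measure_empty]

theorem stmt_6 (r : ℝ) (hr : r ∈ Set.Icc (0 : ℝ) (1 / 2)) :
    volume (regionA r) = ENNReal.ofReal (1 / 12 - r ^ 2 / 2 + r ^ 3 / 2) := by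
  obtain ⟨hr₀, hr₁⟩ := hr
  rw [Measure.volume_eq_prod, Measure.prod_apply_eq_ofReal_setIntegral (measurableSet_regionA r)
    measurableSet_Icc continuous_sliceArea.integrableOn_Icc
    (fun x hx ↦ sliceArea_nonneg (hr₀.trans hx.1) hx.2) (volume_preimage_mk_regionA hr₀),
    integral_Icc_eq_integral_Ioc, ← intervalIntegral.integral_of_le (by linarith),
    integral_sliceArea hr₁]
end
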